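/- arXiv:2312.07518 — 6 statements merged into one kernel-verified Lean document; each statement's English description precedes it below -/
import Mathlib

section
/- Let n = 4 and let g : Fin n → Fin n → Fin n → Fin n → ℝ be a completely symmetric 4-tensor. Define G : Fin n → Fin n → Fin n → Fin n → ℝ by G i j k l = ∑_{σ,τ,ρ ∈ S₄} sign σ · sign τ · sign ρ · g i (σ 0) (τ 0) (ρ 0) · g j (σ 1) (τ 1) (ρ 1) · g k (σ 2) (τ 2) (ρ 2) · g l (σ 3) (τ 3) (ρ 3). Then G is completely antisymmetric: swapping any two of its arguments negates its value. -/
/-- Real-valued sign of a permutation. -/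
def psgn {k : ℕ} (σ : Equiv.Perm (Fin k)) : ℝ := ((Equiv.Perm.sign σ : ℤ) : ℝ)

lemma psgn_mul_swap {a b : Fin 4} (hab : a ≠ b) (σ : Equiv.Perm (Fin 4)) :
    psgn (σ * Equiv.swap a b) = -psgn σ := by
  simp [psgn, Equiv.Perm.sign_swap hab]

/-- Auxiliary sum used to rewrite `G`. -/
def Ssum (g : Fin 4 → Fin 4 → Fin 4 → Fin 4 → ℝ) (v : Fin 4 → Fin 4) : ℝ :=
  ∑ σ : Equiv.Perm (Fin 4), ∑ τ : Equiv.Perm (Fin 4), ∑ ρ : Equiv.Perm (Fin 4),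
    psgn σ * psgn τ * psgn ρ * ∏ m : Fin 4, g (v m) (σ m) (τ m) (ρ m)

lemma Ssum_swap (g : Fin 4 → Fin 4 → Fin 4 → Fin 4 → ℝ) (v : Fin 4 → Fin 4)
    {a b : Fin 4} (hab : a ≠ b) :
    Ssum g (v ∘ Equiv.swap a b) = -Ssum g v := by
  set c := Equiv.swap a b with hc
  unfold Ssum
  simp only [← Finset.sum_neg_distrib]
  refine Fintype.sum_equiv (Equiv.mulRight c) _ _ fun σ => ?_
  refine Fintype.sum_equiv (Equiv.mulRight c) _ _ fun τ => ?_
  refine Fintype.sum_equiv (Equiv.mulRight c) _ _ fun ρ => ?_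
  simp only [Equiv.coe_mulRight, Equiv.Perm.mul_apply, Function.comp_apply]
  rw [← Equiv.prod_comp c (fun m => g (v m) (σ (c m)) (τ (c m)) (ρ (c m)))]
  simp only [hc, Equiv.swap_apply_self]
  rw [psgn_mul_swap hab σ, psgn_mul_swap hab τ, psgn_mul_swap hab ρ]
  ring

theorem stmt1 (g : Fin 4 → Fin 4 → Fin 4 → Fin 4 → ℝ)
    (hsym : ∀ i j k l, g i j k l = g j i k l ∧ g i j k l = g i k j l ∧ g i j k l = g i j l k)
    (G : Fin 4 → Fin 4 → Fin 4 → Fin 4 → ℝ)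
    (hG : ∀ i j k l, G i j k l =
      ∑ σ : Equiv.Perm (Fin 4), ∑ τ : Equiv.Perm (Fin 4), ∑ ρ : Equiv.Perm (Fin 4),
        psgn σ * psgn τ * psgn ρ *
          (g i (σ 0) (τ 0) (ρ 0) * g j (σ 1) (τ 1) (ρ 1) *
           g k (σ 2) (τ 2) (ρ 2) * g l (σ 3) (τ 3) (ρ 3))) :
    ∀ i j k l,
      G j i k l = -G i j k l ∧ G k j i l = -G i j k l ∧ G l j k i = -G i j k l ∧
      G i k j l = -G i j k l ∧ G i l k j = -G i j k l ∧ G i j l k = -G i j k l := by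
  have hG' : ∀ i j k l, G i j k l = Ssum g ![i, j, k, l] := by
    intro i j k l
    rw [hG]
    unfold Ssum
    simp [Fin.prod_univ_four]
  intro i j k l
  have h01 : (![j, i, k, l] : Fin 4 → Fin 4) = ![i, j, k, l] ∘ Equiv.swap 0 1 := by
    funext m; fin_cases m <;> simp [Equiv.swap_apply_def]
  have h02 : (![k, j, i, l] : Fin 4 → Fin 4) = ![i, j, k, l] ∘ Equiv.swap 0 2 := by
    funext m; fin_cases m <;> simp [Equiv.swap_apply_def]
  have h03 : (![l, j, k, i] : Fin 4 → Fin 4) = ![i, j, k, l] ∘ Equiv.swap 0 3 := by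
    funext m; fin_cases m <;> simp [Equiv.swap_apply_def]
  have h12 : (![i, k, j, l] : Fin 4 → Fin 4) = ![i, j, k, l] ∘ Equiv.swap 1 2 := by
    funext m; fin_cases m <;> simp [Equiv.swap_apply_def]
  have h13 : (![i, l, k, j] : Fin 4 → Fin 4) = ![i, j, k, l] ∘ Equiv.swap 1 3 := by
    funext m; fin_cases m <;> simp [Equiv.swap_apply_def]
  have h23 : (![i, j, l, k] : Fin 4 → Fin 4) = ![i, j, k, l] ∘ Equiv.swap 2 3 := by
    funext m; fin_cases m <;> simp [Equiv.swap_apply_def]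
  refine ⟨?_, ?_, ?_, ?_, ?_, ?_⟩
  · rw [hG', hG', h01, Ssum_swap g _ (by decide)]
  · rw [hG', hG', h02, Ssum_swap g _ (by decide)]
  · rw [hG', hG', h03, Ssum_swap g _ (by decide)]
  · rw [hG', hG', h12, Ssum_swap g _ (by decide)]
  · rw [hG', hG', h13, Ssum_swap g _ (by decide)]
  · rw [hG', hG', h23, Ssum_swap g _ (by decide)]
end

section
/- Let g : Fin 2 → Fin 2 → Fin 2 → ℝ be a completely symmetric 3-tensor (m = 3, n = 2). Define G : Fin 2 → Fin 2 → ℝ by G i j = ∑_{σ,τ ∈ S₂} sign σ · sign τ · g i (σ 0) (τ 0) · g j (σ 1) (τ 1). Then G is symmetric: G i j = G j i. -/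
/-! Reindexing both sums by `σ ↦ σ * swap 0 1`, `τ ↦ τ * swap 0 1` exchanges the two copies of `g`
and multiplies every term by `(-1)²`; with `m` copies and `m - 1` sums the factor would be
`(-1) ^ (m - 1) = 1` for odd `m`. -/

open Equiv

section

variable {k : ℕ}

theorem psgn_mul (σ τ : Perm (Fin k)) : psgn (σ * τ) = psgn σ * psgn τ := by
  simp [psgn]

theorem psgn_mul_self (σ : Perm (Fin k)) : psgn σ * psgn σ = 1 := by
  rw [← psgn_mul, psgn, ← Int.cast_one (R := ℝ), ← Units.val_one, Perm.sign_mul,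
    Int.units_mul_self]

theorem psgn_swap {a b : Fin k} (h : a ≠ b) : psgn (swap a b) = -1 := by
  simp [psgn, Perm.sign_swap h]

theorem psgn_mul_mul_psgn_right (σ c : Perm (Fin k)) : psgn (σ * c) * psgn c = psgn σ := by
  rw [psgn_mul, mul_assoc, psgn_mul_self, mul_one]

theorem sum_sum_psgn_mul_comp_mul_right (c d : Perm (Fin k))
    (f : Perm (Fin k) → Perm (Fin k) → ℝ) :
    ∑ σ, ∑ τ, psgn σ * psgn τ * f (σ * c) (τ * d) =
      psgn c * psgn d * ∑ σ, ∑ τ, psgn σ * psgn τ * f σ τ := by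
  rw [Finset.mul_sum]
  refine Fintype.sum_equiv (Equiv.mulRight c) _ _ fun σ => ?_
  rw [Finset.mul_sum]
  refine Fintype.sum_equiv (Equiv.mulRight d) _ _ fun τ => ?_
  rw [Equiv.coe_mulRight, Equiv.coe_mulRight, ← psgn_mul_mul_psgn_right σ c,
    ← psgn_mul_mul_psgn_right τ d]
  ring

end

theorem stmt2_general (g : Fin 2 → Fin 2 → Fin 2 → ℝ)
    (G : Fin 2 → Fin 2 → ℝ)
    (hG : ∀ i j, G i j =
      ∑ σ : Equiv.Perm (Fin 2), ∑ τ : Equiv.Perm (Fin 2),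
        psgn σ * psgn τ * (g i (σ 0) (τ 0) * g j (σ 1) (τ 1))) :
    ∀ i j, G i j = G j i := by
  intro i j
  have hswap := sum_sum_psgn_mul_comp_mul_right (swap 0 1) (swap 0 1)
    fun σ τ => g i (σ 0) (τ 0) * g j (σ 1) (τ 1)
  simp only [Perm.mul_apply, swap_apply_left, swap_apply_right,
    psgn_swap (show (0 : Fin 2) ≠ 1 by decide), neg_one_mul, neg_neg, one_mul] at hswap
  rw [hG, hG, ← hswap]
  simp only [mul_comm (g i _ _)]

theorem stmt2 (g : Fin 2 → Fin 2 → Fin 2 → ℝ)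
    (hsym : ∀ i j k, g i j k = g j i k ∧ g i j k = g i k j)
    (G : Fin 2 → Fin 2 → ℝ)
    (hG : ∀ i j, G i j =
      ∑ σ : Equiv.Perm (Fin 2), ∑ τ : Equiv.Perm (Fin 2),
        psgn σ * psgn τ * (g i (σ 0) (τ 0) * g j (σ 1) (τ 1))) :
    ∀ i j, G i j = G j i :=
  stmt2_general g G hG
end

section
/- Let g : Fin 2 → Fin 2 → Fin 2 → Fin 2 → ℝ be a completely symmetric 4-tensor and A : Fin 2 → Fin 2 → ℝ a matrix. Define g' i₁ i₂ i₃ i₄ = ∑_{j₁,j₂,j₃,j₄} A j₁ i₁ · A j₂ i₂ · A j₃ i₃ · A j₄ i₄ · g j₁ j₂ j₃ j₄, and for a symmetric 4-tensor h let hdet h = h 0 0 0 0 · h 1 1 1 1 − 4 · h 0 0 0 1 · h 0 1 1 1 + 3 · (h 0 0 1 1)^2. Then hdet g' = (det A)^4 · hdet g. -/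
/-- The quartic 2-dimensional Cayley hyperdeterminant of a symmetric 4-tensor. -/
def hdet4 (h : Fin 2 → Fin 2 → Fin 2 → Fin 2 → ℝ) : ℝ :=
  h 0 0 0 0 * h 1 1 1 1 - 4 * (h 0 0 0 1 * h 0 1 1 1) + 3 * (h 0 0 1 1) ^ 2

/-!
A totally symmetric 4-tensor on a 2-dimensional space only depends on how many of its indices
are `1`, so it is the polarization of the binary quartic `∑ₙ (4 choose n) cₙ xⁿ y⁴⁻ⁿ`, and
`hdet4` is the classical invariant `c₀c₄ - 4c₁c₃ + 3c₂²` of that quartic. Once the tensor is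
written through its five coefficients, the transformation law is a polynomial identity in the
entries of `A` and the `cₙ`.
-/

def tensorPullback {ι R : Type*} [Fintype ι] [CommSemiring R] (A : Matrix ι ι R)
    (g : ι → ι → ι → ι → R) : ι → ι → ι → ι → R :=
  fun i₁ i₂ i₃ i₄ => ∑ j₁, ∑ j₂, ∑ j₃, ∑ j₄, A j₁ i₁ * A j₂ i₂ * A j₃ i₃ * A j₄ i₄ * g j₁ j₂ j₃ j₄

def quarticTensor {α : Type*} (c : Fin 5 → α) : Fin 2 → Fin 2 → Fin 2 → Fin 2 → α :=
  fun i j k l => c ⟨i + j + k + l, by omega⟩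

theorem eq_quarticTensor_of_symm {α : Type*} {g : Fin 2 → Fin 2 → Fin 2 → Fin 2 → α}
    (hsym : ∀ i j k l, g i j k l = g j i k l ∧ g i j k l = g i k j l ∧ g i j k l = g i j l k) :
    g = quarticTensor ![g 0 0 0 0, g 0 0 0 1, g 0 0 1 1, g 0 1 1 1, g 1 1 1 1] := by
  have s12 : ∀ i j k l, g i j k l = g j i k l := fun i j k l => (hsym i j k l).1
  have s23 : ∀ i j k l, g i j k l = g i k j l := fun i j k l => (hsym i j k l).2.1
  have s34 : ∀ i j k l, g i j k l = g i j l k := fun i j k l => (hsym i j k l).2.2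
  funext i j k l
  fin_cases i <;> fin_cases j <;> fin_cases k <;> fin_cases l <;>
    simp only [quarticTensor, Fin.zero_eta, Fin.mk_one, Fin.isValue,
      Nat.reduceAdd, Fin.reduceFinMk, Matrix.cons_val] <;> grind

theorem hdet4_tensorPullback_quarticTensor (A : Matrix (Fin 2) (Fin 2) ℝ) (c : Fin 5 → ℝ) :
    hdet4 (tensorPullback A (quarticTensor c)) = A.det ^ 4 * hdet4 (quarticTensor c) := by
  simp only [hdet4, tensorPullback, quarticTensor, Fin.sum_univ_two, Matrix.det_fin_two,
    Fin.isValue, Fin.val_zero, Fin.val_one, Nat.reduceAdd, Fin.reduceFinMk]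
  ring

theorem stmt5 (g : Fin 2 → Fin 2 → Fin 2 → Fin 2 → ℝ)
    (hsym : ∀ i j k l, g i j k l = g j i k l ∧ g i j k l = g i k j l ∧ g i j k l = g i j l k)
    (A : Matrix (Fin 2) (Fin 2) ℝ)
    (g' : Fin 2 → Fin 2 → Fin 2 → Fin 2 → ℝ)
    (hg' : ∀ i₁ i₂ i₃ i₄, g' i₁ i₂ i₃ i₄ =
      ∑ j₁, ∑ j₂, ∑ j₃, ∑ j₄, A j₁ i₁ * A j₂ i₂ * A j₃ i₃ * A j₄ i₄ * g j₁ j₂ j₃ j₄) :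
    hdet4 g' = A.det ^ 4 * hdet4 g := by
  have hg'_eq : g' = tensorPullback A g := by
    funext i₁ i₂ i₃ i₄
    exact hg' i₁ i₂ i₃ i₄
  rw [hg'_eq, eq_quarticTensor_of_symm hsym]
  exact hdet4_tensorPullback_quarticTensor A _
end

section
/- Let g : Fin 2 → Fin 2 → Fin 2 → Fin 2 → ℝ be a completely symmetric 4-tensor and A : Fin 2 → Fin 2 → ℝ a matrix with det A > 0, and let g' be the pullback of g along A (g' i₁ i₂ i₃ i₄ = ∑ A j₁ i₁ · A j₂ i₂ · A j₃ i₃ · A j₄ i₄ · g j₁ j₂ j₃ j₄). With hdet as the quartic 2-dimensional hyperdeterminant (hdet h = h₀₀₀₀ h₁₁₁₁ − 4 h₀₀₀₁ h₀₁₁₁ + 3 h₀₀₁₁²), we have |hdet g'|^(1/4) = |hdet g|^(1/4) · det A. -/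
theorem hdet4_pullback (g : Fin 2 → Fin 2 → Fin 2 → Fin 2 → ℝ)
    (hsym : ∀ i j k l, g i j k l = g j i k l ∧ g i j k l = g i k j l ∧ g i j k l = g i j l k)
    (A : Matrix (Fin 2) (Fin 2) ℝ) :
    hdet4 (fun i₁ i₂ i₃ i₄ =>
      ∑ j₁, ∑ j₂, ∑ j₃, ∑ j₄, A j₁ i₁ * A j₂ i₂ * A j₃ i₃ * A j₄ i₄ * g j₁ j₂ j₃ j₄) =
      A.det ^ 4 * hdet4 g := by
  have s12 i j k l : g i j k l = g j i k l := (hsym i j k l).1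
  have s23 i j k l : g i j k l = g i k j l := (hsym i j k l).2.1
  have s34 i j k l : g i j k l = g i j l k := (hsym i j k l).2.2
  -- reduce every entry to one of the five coefficients `g 0 0 0 0, g 0 0 0 1, …, g 1 1 1 1`
  have e0010 : g 0 0 1 0 = g 0 0 0 1 := (s34 0 0 0 1).symm
  have e0100 : g 0 1 0 0 = g 0 0 0 1 := (s23 0 0 1 0).symm.trans e0010
  have e1000 : g 1 0 0 0 = g 0 0 0 1 := (s12 0 1 0 0).symm.trans e0100
  have e0101 : g 0 1 0 1 = g 0 0 1 1 := (s23 0 0 1 1).symm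
  have e1001 : g 1 0 0 1 = g 0 0 1 1 := (s12 0 1 0 1).symm.trans e0101
  have e0110 : g 0 1 1 0 = g 0 0 1 1 := (s34 0 1 0 1).symm.trans e0101
  have e1010 : g 1 0 1 0 = g 0 0 1 1 := (s12 0 1 1 0).symm.trans e0110
  have e1100 : g 1 1 0 0 = g 0 0 1 1 := (s23 1 0 1 0).symm.trans e1010
  have e1011 : g 1 0 1 1 = g 0 1 1 1 := (s12 0 1 1 1).symm
  have e1101 : g 1 1 0 1 = g 0 1 1 1 := (s23 1 0 1 1).symm.trans e1011
  have e1110 : g 1 1 1 0 = g 0 1 1 1 := (s34 1 1 0 1).symm.trans e1101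
  simp only [hdet4, Fin.sum_univ_two, Matrix.det_fin_two,
    e0010, e0100, e1000, e0101, e1001, e0110, e1010, e1100, e1011, e1101, e1110]
  ring

theorem Real.abs_pow_mul_rpow_inv_natCast {c : ℝ} (hc : 0 ≤ c) (x : ℝ) {n : ℕ} (hn : n ≠ 0) :
    |c ^ n * x| ^ (n⁻¹ : ℝ) = |x| ^ (n⁻¹ : ℝ) * c := by
  rw [abs_mul, abs_pow, abs_of_nonneg hc, Real.mul_rpow (by positivity) (abs_nonneg x),
    Real.pow_rpow_inv_natCast hc hn, mul_comm]

theorem stmt6 (g : Fin 2 → Fin 2 → Fin 2 → Fin 2 → ℝ)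
    (hsym : ∀ i j k l, g i j k l = g j i k l ∧ g i j k l = g i k j l ∧ g i j k l = g i j l k)
    (A : Matrix (Fin 2) (Fin 2) ℝ) (hA : 0 < A.det)
    (g' : Fin 2 → Fin 2 → Fin 2 → Fin 2 → ℝ)
    (hg' : ∀ i₁ i₂ i₃ i₄, g' i₁ i₂ i₃ i₄ =
      ∑ j₁, ∑ j₂, ∑ j₃, ∑ j₄, A j₁ i₁ * A j₂ i₂ * A j₃ i₃ * A j₄ i₄ * g j₁ j₂ j₃ j₄) :
    |hdet4 g'| ^ ((1 : ℝ) / 4) = |hdet4 g| ^ ((1 : ℝ) / 4) * A.det := by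
  obtain rfl : g' = _ := funext fun i₁ => funext fun i₂ => funext fun i₃ => funext (hg' i₁ i₂ i₃)
  rw [hdet4_pullback g hsym A, one_div]
  exact_mod_cast Real.abs_pow_mul_rpow_inv_natCast hA.le (hdet4 g) (n := 4) (by norm_num)
end

section
/- Let g : Fin 2 → Fin 2 → Fin 2 → ℝ be a completely symmetric 3-tensor, write a = g 0 0 0, b = g 0 0 1, c = g 0 1 1, d = g 1 1 1. Define G i j = ∑_{σ,τ ∈ S₂} sign σ · sign τ · g i (σ 0) (τ 0) · g j (σ 1) (τ 1). Then det G (as a 2×2 matrix) equals −(a d)² + 6 a b c d − 4 a c³ − 4 b³ d + 3 (b c)². -/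
theorem Equiv.Perm.sum_fin_two {M : Type*} [AddCommMonoid M] (f : Equiv.Perm (Fin 2) → M) :
    ∑ σ, f σ = f 1 + f (Equiv.swap 0 1) := by
  rw [show (Finset.univ : Finset (Equiv.Perm (Fin 2))) = {1, Equiv.swap 0 1} by decide,
    Finset.sum_pair (by decide)]

theorem sum_psgn_mul_psgn_fin_two (A B : Matrix (Fin 2) (Fin 2) ℝ) :
    ∑ σ : Equiv.Perm (Fin 2), ∑ τ : Equiv.Perm (Fin 2),
        psgn σ * psgn τ * (A (σ 0) (τ 0) * B (σ 1) (τ 1)) =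
      (A + B).det - A.det - B.det := by
  simp only [Equiv.Perm.sum_fin_two, psgn, Equiv.Perm.sign_one,
    Equiv.Perm.sign_swap (show (0 : Fin 2) ≠ 1 by decide), Matrix.det_fin_two,
    Equiv.Perm.one_apply, Equiv.swap_apply_left, Equiv.swap_apply_right, Matrix.add_apply]
  push_cast
  ring

theorem slices_of_symmetric_fin_two (g : Fin 2 → Fin 2 → Fin 2 → ℝ)
    (hsym : ∀ i j k, g i j k = g j i k ∧ g i j k = g i k j)
    {a b c d : ℝ} (ha : a = g 0 0 0) (hb : b = g 0 0 1) (hc : c = g 0 1 1) (hd : d = g 1 1 1) :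
    g 0 = !![a, b; b, c] ∧ g 1 = !![b, c; c, d] := by
  subst ha hb hc hd
  constructor <;> ext j k <;> fin_cases j <;> fin_cases k <;>
    simp [(hsym 0 1 0).2, (hsym 1 0 0).1, (hsym 1 0 1).1, (hsym 1 1 0).2]

theorem stmt7 (g : Fin 2 → Fin 2 → Fin 2 → ℝ)
    (hsym : ∀ i j k, g i j k = g j i k ∧ g i j k = g i k j)
    (a b c d : ℝ) (ha : a = g 0 0 0) (hb : b = g 0 0 1) (hc : c = g 0 1 1) (hd : d = g 1 1 1)
    (G : Matrix (Fin 2) (Fin 2) ℝ)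
    (hG : ∀ i j, G i j =
      ∑ σ : Equiv.Perm (Fin 2), ∑ τ : Equiv.Perm (Fin 2),
        psgn σ * psgn τ * (g i (σ 0) (τ 0) * g j (σ 1) (τ 1))) :
    G.det = -(a * d) ^ 2 + 6 * (a * b * c * d) - 4 * (a * c ^ 3) - 4 * (b ^ 3 * d)
      + 3 * (b * c) ^ 2 := by
  obtain ⟨hg0, hg1⟩ := slices_of_symmetric_fin_two g hsym ha hb hc hd
  have hG_eq : G = !![2 * (a * c - b ^ 2), a * d - b * c; a * d - b * c, 2 * (b * d - c ^ 2)] := by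
    ext i j
    rw [hG, sum_psgn_mul_psgn_fin_two (g i) (g j)]
    fin_cases i <;> fin_cases j <;> simp [hg0, hg1, Matrix.det_fin_two] <;> ring
  rw [hG_eq, Matrix.det_fin_two_of]
  ring
end

section
/- Let g : Fin 2 → Fin 2 → Fin 2 → ℝ be a completely symmetric 3-tensor and A : Fin 2 → Fin 2 → ℝ a matrix. Define g' i₁ i₂ i₃ = ∑_{j₁,j₂,j₃} A j₁ i₁ · A j₂ i₂ · A j₃ i₃ · g j₁ j₂ j₃, and G' i j = ∑_{σ,τ ∈ S₂} sign σ · sign τ · g' i (σ 0) (τ 0) · g' j (σ 1) (τ 1), and similarly G from g. Then det G' = (det A)^6 · det G. -/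
open Equiv Finset Function

theorem Fintype.sum_fun_eq_sum_perm {n M : Type*} [Fintype n] [DecidableEq n] [AddCommMonoid M]
    (f : (n → n) → M) (hf : ∀ c, ¬Injective c → f c = 0) :
    ∑ c, f c = ∑ σ : Perm n, f σ :=
  (Fintype.sum_of_injective _ DFunLike.coe_injective _ _
    (fun c hc ↦ hf c fun hinj ↦ hc ⟨.ofBijective c hinj.bijective_of_finite, rfl⟩)
    fun _ ↦ rfl).symm

theorem Fintype.sum_fin_two_fun {α M : Type*} [Fintype α] [AddCommMonoid M]
    (f : (Fin 2 → α) → M) :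
    ∑ κ, f κ = ∑ a, ∑ b, f ![a, b] := by
  rw [← Fintype.sum_prod_type', ← (finTwoArrowEquiv α).symm.sum_comp]
  rfl

namespace Matrix

variable {n R : Type*} [Fintype n] [DecidableEq n] [CommRing R]

/-- Unnormalised: `mixedDiscriminant (fun _ ↦ M) = (Fintype.card n)! * M.det`. -/
def mixedDiscriminant (M : n → Matrix n n R) : R :=
  ∑ σ : Perm n, ∑ τ : Perm n,
    ((Perm.sign σ : ℤ) : R) * ((Perm.sign τ : ℤ) : R) * ∏ m, M m (σ m) (τ m)

theorem sum_sign_mul_prod_eq_det_submatrix (P : Matrix n n R) (c : n → n) :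
    ∑ σ : Perm n, ((Perm.sign σ : ℤ) : R) * ∏ m, P (c m) (σ m) = (P.submatrix c id).det := by
  rw [← det_transpose, det_apply']
  rfl

theorem det_submatrix_eq_zero_of_not_injective (P : Matrix n n R) {c : n → n}
    (hc : ¬Injective c) : (P.submatrix c id).det = 0 := by
  obtain ⟨i, j, hij, hne⟩ : ∃ i j, c i = c j ∧ i ≠ j := by simpa [Injective] using hc
  exact det_zero_of_row_eq hne (by ext; simp [hij])

theorem prod_transpose_mul_mul_apply (P : Matrix n n R) (M : n → Matrix n n R) (a b : n → n) :
    ∏ m, (Pᵀ * M m * P) (a m) (b m) =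
      ∑ c : n → n, ∑ d : n → n,
        (∏ m, P (c m) (a m)) * (∏ m, P (d m) (b m)) * ∏ m, M m (c m) (d m) := by
  simp only [mul_apply, transpose_apply, sum_mul, Fintype.prod_sum, prod_mul_distrib]
  rw [sum_comm]
  refine sum_congr rfl fun c _ ↦ sum_congr rfl fun d _ ↦ ?_
  ring

theorem mixedDiscriminant_transpose_mul_mul (P : Matrix n n R) (M : n → Matrix n n R) :
    mixedDiscriminant (fun m ↦ Pᵀ * M m * P) = P.det ^ 2 * mixedDiscriminant M := by
  calc mixedDiscriminant (fun m ↦ Pᵀ * M m * P)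
      = ∑ c : n → n, ∑ d : n → n,
          (P.submatrix c id).det * (P.submatrix d id).det * ∏ m, M m (c m) (d m) := by
        simp only [mixedDiscriminant, prod_transpose_mul_mul_apply, mul_sum,
          ← sum_sign_mul_prod_eq_det_submatrix, sum_mul]
        refine sum_comm_cycle.trans (sum_congr rfl fun c _ ↦ sum_comm_cycle.trans
          (sum_congr rfl fun d _ ↦ sum_comm.trans
            (sum_congr rfl fun τ _ ↦ sum_congr rfl fun σ _ ↦ ?_)))
        ring
    _ = ∑ c : Perm n, ∑ d : Perm n,
          (P.submatrix c id).det * (P.submatrix d id).det * ∏ m, M m (c m) (d m) := by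
        rw [Fintype.sum_fun_eq_sum_perm]
        · refine sum_congr rfl fun c _ ↦ Fintype.sum_fun_eq_sum_perm _ fun d hd ↦ ?_
          simp [det_submatrix_eq_zero_of_not_injective P hd]
        · intro c hc
          simp [det_submatrix_eq_zero_of_not_injective P hc]
    _ = P.det ^ 2 * mixedDiscriminant M := by
        simp only [det_permute, mixedDiscriminant, mul_sum]
        refine sum_congr rfl fun c _ ↦ sum_congr rfl fun d _ ↦ ?_
        ring

theorem mixedDiscriminant_sum_smul {ι : Type*} [Fintype ι] (w : n → ι → R)
    (N : ι → Matrix n n R) :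
    mixedDiscriminant (fun m ↦ ∑ k, w m k • N k) =
      ∑ κ : n → ι, (∏ m, w m (κ m)) * mixedDiscriminant (fun m ↦ N (κ m)) := by
  simp only [mixedDiscriminant, sum_apply, smul_apply, smul_eq_mul, Fintype.prod_sum,
    prod_mul_distrib, mul_sum]
  refine sum_comm_cycle.trans (sum_congr rfl fun κ _ ↦ sum_congr rfl fun σ _ ↦
    sum_congr rfl fun τ _ ↦ ?_)
  ring

theorem mixedDiscriminant_sum_smul_transpose_mul_mul (A : Matrix n n R) (T : n → Matrix n n R)
    (i : n → n) :
    mixedDiscriminant (fun m ↦ ∑ k, A k (i m) • (Aᵀ * T k * A)) =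
      A.det ^ 2 * ∑ κ : n → n, (∏ m, A (κ m) (i m)) * mixedDiscriminant (fun m ↦ T (κ m)) := by
  simp only [mixedDiscriminant_sum_smul (fun m k ↦ A k (i m)),
    mixedDiscriminant_transpose_mul_mul, mul_sum]
  exact sum_congr rfl fun κ _ ↦ by ring

end Matrix

open Matrix

theorem sum_psgn_mul_eq_mixedDiscriminant (T : Fin 2 → Fin 2 → Fin 2 → ℝ) (i j : Fin 2) :
    ∑ σ : Equiv.Perm (Fin 2), ∑ τ : Equiv.Perm (Fin 2),
        psgn σ * psgn τ * (T i (σ 0) (τ 0) * T j (σ 1) (τ 1)) =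
      mixedDiscriminant (fun m ↦ of (T (![i, j] m))) := by
  simp [mixedDiscriminant, Fin.prod_univ_two, psgn]

theorem stmt8_general (g : Fin 2 → Fin 2 → Fin 2 → ℝ)
    (A : Matrix (Fin 2) (Fin 2) ℝ)
    (g' : Fin 2 → Fin 2 → Fin 2 → ℝ)
    (hg' : ∀ i₁ i₂ i₃, g' i₁ i₂ i₃ = ∑ j₁, ∑ j₂, ∑ j₃, A j₁ i₁ * A j₂ i₂ * A j₃ i₃ * g j₁ j₂ j₃)
    (G G' : Matrix (Fin 2) (Fin 2) ℝ)
    (hG : ∀ i j, G i j =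
      ∑ σ : Equiv.Perm (Fin 2), ∑ τ : Equiv.Perm (Fin 2),
        psgn σ * psgn τ * (g i (σ 0) (τ 0) * g j (σ 1) (τ 1)))
    (hG' : ∀ i j, G' i j =
      ∑ σ : Equiv.Perm (Fin 2), ∑ τ : Equiv.Perm (Fin 2),
        psgn σ * psgn τ * (g' i (σ 0) (τ 0) * g' j (σ 1) (τ 1))) :
    G'.det = A.det ^ 6 * G.det := by
  have slice : ∀ i, of (g' i) = ∑ k, A k i • (Aᵀ * of (g k) * A) := by
    intro i
    ext a b
    simp only [hg', of_apply, Matrix.sum_apply, Matrix.smul_apply, smul_eq_mul, mul_apply,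
      transpose_apply, Finset.mul_sum, Finset.sum_mul]
    refine Finset.sum_congr rfl fun k _ ↦ Finset.sum_comm.trans
      (Finset.sum_congr rfl fun c _ ↦ Finset.sum_congr rfl fun d _ ↦ ?_)
    ring
  have congruence : G' = A.det ^ 2 • (Aᵀ * G * A) := by
    ext i j
    rw [hG', sum_psgn_mul_eq_mixedDiscriminant]
    simp only [slice]
    rw [mixedDiscriminant_sum_smul_transpose_mul_mul, Fintype.sum_fin_two_fun]
    simp only [Matrix.smul_apply, smul_eq_mul, mul_apply, transpose_apply, Finset.sum_mul, hG,
      sum_psgn_mul_eq_mixedDiscriminant, Fin.prod_univ_two, cons_val_zero, cons_val_one]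
    rw [Finset.sum_comm]
    exact congrArg _ (Finset.sum_congr rfl fun l _ ↦ Finset.sum_congr rfl fun k _ ↦ by ring)
  rw [congruence, det_smul, det_mul, det_mul, det_transpose, Fintype.card_fin]
  ring

theorem stmt8 (g : Fin 2 → Fin 2 → Fin 2 → ℝ)
    (hsym : ∀ i j k, g i j k = g j i k ∧ g i j k = g i k j)
    (A : Matrix (Fin 2) (Fin 2) ℝ)
    (g' : Fin 2 → Fin 2 → Fin 2 → ℝ)
    (hg' : ∀ i₁ i₂ i₃, g' i₁ i₂ i₃ = ∑ j₁, ∑ j₂, ∑ j₃, A j₁ i₁ * A j₂ i₂ * A j₃ i₃ * g j₁ j₂ j₃)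
    (G G' : Matrix (Fin 2) (Fin 2) ℝ)
    (hG : ∀ i j, G i j =
      ∑ σ : Equiv.Perm (Fin 2), ∑ τ : Equiv.Perm (Fin 2),
        psgn σ * psgn τ * (g i (σ 0) (τ 0) * g j (σ 1) (τ 1)))
    (hG' : ∀ i j, G' i j =
      ∑ σ : Equiv.Perm (Fin 2), ∑ τ : Equiv.Perm (Fin 2),
        psgn σ * psgn τ * (g' i (σ 0) (τ 0) * g' j (σ 1) (τ 1))) :
    G'.det = A.det ^ 6 * G.det :=
  stmt8_general g A g' hg' G G' hG hG'
end
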